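/- arXiv:1703.01329 — 7 statements merged into one kernel-verified Lean document; each statement's English description precedes it below -/
import Mathlib

section
/- Suppose that (i) for all p ∈ ℝ and all α ≤ β one has A_α^p ⊆ A_β^p, and (ii) A_m^p is a convex subset of P(ℝ) for all p, m ∈ ℝ. Then R_𝔸 satisfies (QCo): for every p ∈ ℝ, X ∈ L(Ω,F), ℙ¹, ℙ² ∈ P(Ω) and λ ∈ (0,1), R_𝔸(p,X,λℙ¹+(1−λ)ℙ²) ≤ max{R_𝔸(p,X,ℙ¹), R_𝔸(p,X,ℙ²)}. -/
open MeasureTheory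

/-- `RA A p X μ = inf {m : ℝ | law of X under μ ∈ A_m^p}` as an extended real. -/
noncomputable def RA {Ω : Type*} [MeasurableSpace Ω]
    (A : ℝ → ℝ → Set (Measure ℝ)) (p : ℝ) (X : Ω → ℝ) (μ : Measure Ω) : EReal :=
  sInf (Real.toEReal '' {m : ℝ | μ.map X ∈ A p m})

theorem stmt3 {Ω : Type*} [m0 : MeasurableSpace Ω] [TopologicalSpace Ω] [PolishSpace Ω]
    (hF : m0 ≤ borel Ω)
    (A : ℝ → ℝ → Set (Measure ℝ))
    (hmono : ∀ (p α β : ℝ), α ≤ β → A p α ⊆ A p β)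
    (hconv : ∀ (p m : ℝ), ∀ P ∈ A p m, ∀ Q ∈ A p m, ∀ t : ℝ, 0 ≤ t → t ≤ 1 →
      ENNReal.ofReal t • P + ENNReal.ofReal (1 - t) • Q ∈ A p m)
    (p : ℝ) (X : Ω → ℝ) (hX : Measurable X)
    (μ₁ μ₂ : Measure Ω) (hμ₁ : IsProbabilityMeasure μ₁) (hμ₂ : IsProbabilityMeasure μ₂)
    (l : ℝ) (hl0 : 0 < l) (hl1 : l < 1) :
    RA A p X (ENNReal.ofReal l • μ₁ + ENNReal.ofReal (1 - l) • μ₂) ≤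
      max (RA A p X μ₁) (RA A p X μ₂) := by
  refine le_of_forall_gt_imp_ge_of_dense fun a ha => ?_
  obtain ⟨z, hz1, hz2⟩ := EReal.exists_between_coe_real ha
  refine le_trans ?_ hz2.le
  -- get witnesses for μ₁ and μ₂
  have h1 : RA A p X μ₁ < (z : EReal) := lt_of_le_of_lt (le_max_left _ _) hz1
  have h2 : RA A p X μ₂ < (z : EReal) := lt_of_le_of_lt (le_max_right _ _) hz1
  rw [RA, sInf_lt_iff] at h1 h2
  obtain ⟨_, ⟨m₁, hm₁, rfl⟩, hlt₁⟩ := h1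
  obtain ⟨_, ⟨m₂, hm₂, rfl⟩, hlt₂⟩ := h2
  have hz1' : μ₁.map X ∈ A p z := hmono p m₁ z (by exact_mod_cast hlt₁.le) hm₁
  have hz2' : μ₂.map X ∈ A p z := hmono p m₂ z (by exact_mod_cast hlt₂.le) hm₂
  have hmem : (ENNReal.ofReal l • μ₁ + ENNReal.ofReal (1 - l) • μ₂).map X ∈ A p z := by
    rw [Measure.map_add _ _ hX, Measure.map_smul, Measure.map_smul]
    exact hconv p z _ hz1' _ hz2' l hl0.le hl1.le
  exact sInf_le ⟨z, hmem, rfl⟩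
end

section
/- Let R : ℝ × L(Ω,F) × P(Ω) → ℝ ∪ {±∞} satisfy (DCA). Define A^p := {Q_X ∈ P(ℝ) | X ∈ L(Ω,F), Q ∈ P(Ω) and R(p,X,Q) ≤ 0} and 𝔸 = {T_{−m}A^p}_{p,m∈ℝ}. Then R_𝔸 = R, i.e. R(p,X,ℙ) = inf{m ∈ ℝ | ℙ_X ∈ T_{−m}A^p} for all (p,X,ℙ). -/
open MeasureTheory

/-- Translation operator on measures on ℝ: pushforward under `x ↦ x + α`. -/
noncomputable def Tr (α : ℝ) (P : Measure ℝ) : Measure ℝ :=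
  P.map (fun x => x + α)

theorem stmt5 {Ω : Type*} [m0 : MeasurableSpace Ω] [TopologicalSpace Ω] [PolishSpace Ω]
    (hF : m0 ≤ borel Ω)
    (R : ℝ → (Ω → ℝ) → Measure Ω → EReal)
    -- (DCA): whenever `T_α(ℙ¹_X) = ℙ²_Y`, one has `R(p,X,ℙ¹) − α = R(p,Y,ℙ²)`.
    (hDCA : ∀ (p α : ℝ) (X Y : Ω → ℝ), Measurable X → Measurable Y →
      ∀ (μ₁ μ₂ : Measure Ω), IsProbabilityMeasure μ₁ → IsProbabilityMeasure μ₂ →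
        Tr α (μ₁.map X) = μ₂.map Y →
        R p X μ₁ - (α : EReal) = R p Y μ₂)
    -- the acceptance family `A^p` of laws of acceptable positions
    (A : ℝ → Set (Measure ℝ))
    (hA : ∀ p : ℝ, A p = {ν : Measure ℝ | ∃ (X : Ω → ℝ) (Q : Measure Ω),
      Measurable X ∧ IsProbabilityMeasure Q ∧ ν = Q.map X ∧ R p X Q ≤ 0}) :
    ∀ (p : ℝ) (X : Ω → ℝ), Measurable X → ∀ (μ : Measure Ω), IsProbabilityMeasure μ →
      R p X μ = sInf (Real.toEReal '' {m : ℝ | μ.map X ∈ Tr (-m) '' A p}) := by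
  intro p X hX μ hμ
  have hset : {m : ℝ | μ.map X ∈ Tr (-m) '' A p} = {m : ℝ | R p X μ ≤ (m : EReal)} := by
    ext m
    simp only [Set.mem_setOf_eq]
    constructor
    · rintro ⟨ν, hν, hTr⟩
      rw [hA p] at hν
      obtain ⟨Y, Q, hY, hQ, rfl, hle⟩ := hν
      have := hDCA p (-m) Y X hY hX Q μ hQ hμ hTr
      have h2 : R p X μ = R p Y Q + (m : EReal) := by
        rw [← this]
        rw [sub_eq_add_neg]
        norm_num
      rw [h2]
      calc R p Y Q + (m : EReal) ≤ 0 + (m : EReal) := by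
            exact add_le_add_left hle _
        _ = (m : EReal) := by simp
    · intro hle
      set Y : Ω → ℝ := fun ω => X ω + m with hYdef
      have hY : Measurable Y := hX.add_const m
      have hmap : Tr m (μ.map X) = μ.map Y := by
        rw [Tr, Measure.map_map (measurable_add_const m) hX]
        rfl
      have hR := hDCA p m X Y hX hY μ μ hμ hμ hmap
      have hRY : R p Y μ ≤ 0 := by
        rw [← hR, sub_eq_add_neg]
        calc R p X μ + (-(m : EReal)) ≤ (m : EReal) + (-(m : EReal)) :=
              add_le_add_left hle _
          _ = 0 := by rw [← EReal.coe_neg, ← EReal.coe_add]; norm_num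
      refine ⟨μ.map Y, ?_, ?_⟩
      · rw [hA p]; exact ⟨Y, μ, hY, hμ, rfl, hRY⟩
      · rw [← hmap, Tr, Tr, Measure.map_map (measurable_add_const (-m))
          (measurable_add_const m)]
        have : ((fun x => x + (-m)) ∘ fun x => x + m) = id := by
          funext x; simp
        rw [this, Measure.map_id]
  rw [hset]
  apply le_antisymm
  · apply le_sInf
    rintro x ⟨m, hm, rfl⟩
    exact hm
  · apply le_of_forall_gt_imp_ge_of_dense
    intro c hc
    obtain ⟨m, hm1, hm2⟩ := EReal.exists_between_coe_real hc
    exact le_trans (sInf_le ⟨m, hm1.le, rfl⟩) hm2.le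
end

section
/- Suppose the family 𝔸 satisfies A_m^{p+α} = A_{m−α}^p for all p, m, α ∈ ℝ. Then there exists a function β : P(ℝ) → ℝ ∪ {±∞} such that R_𝔸(p,X,ℙ) = p + β(ℙ_X) for all (p,X,ℙ); in particular R_𝔸 satisfies (Aff): R_𝔸(p+α,X,ℙ) = R_𝔸(p,X,ℙ) + α for all α ∈ ℝ, and (CLI): whenever ℙ¹_X = ℙ²_Y one has R_𝔸(p,X,ℙ¹) = R_𝔸(p,Y,ℙ²) for all p. -/
open MeasureTheory

lemma sInf_image_add_real (T : Set EReal) (p : ℝ) :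
    sInf ((fun x => x + (p : EReal)) '' T) = sInf T + p := by
  apply le_antisymm
  · rw [← EReal.sub_le_iff_le_add (Or.inl (EReal.coe_ne_bot p)) (Or.inl (EReal.coe_ne_top p))]
    apply le_sInf
    intro t ht
    rw [EReal.sub_le_iff_le_add (Or.inl (EReal.coe_ne_bot p)) (Or.inl (EReal.coe_ne_top p))]
    exact sInf_le ⟨t, ht, rfl⟩
  · apply le_sInf
    rintro _ ⟨t, ht, rfl⟩
    exact add_le_add_left (sInf_le ht) _

theorem stmt6 {Ω : Type*} [m0 : MeasurableSpace Ω] [TopologicalSpace Ω] [PolishSpace Ω]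
    (hF : m0 ≤ borel Ω)
    (A : ℝ → ℝ → Set (Measure ℝ))
    (hA : ∀ p m α : ℝ, A (p + α) m = A p (m - α)) :
    ∃ β : Measure ℝ → EReal,
      (∀ (p : ℝ) (X : Ω → ℝ), Measurable X → ∀ (μ : Measure Ω), IsProbabilityMeasure μ →
        RA A p X μ = (p : EReal) + β (μ.map X)) ∧
      -- (Aff): `R_𝔸(p+α,X,ℙ) = R_𝔸(p,X,ℙ) + α`
      (∀ (p α : ℝ) (X : Ω → ℝ), Measurable X → ∀ (μ : Measure Ω), IsProbabilityMeasure μ →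
        RA A (p + α) X μ = RA A p X μ + (α : EReal)) ∧
      -- (CLI): `ℙ¹_X = ℙ²_Y` implies `R_𝔸(p,X,ℙ¹) = R_𝔸(p,Y,ℙ²)`
      (∀ (p : ℝ) (X Y : Ω → ℝ), Measurable X → Measurable Y →
        ∀ (μ₁ μ₂ : Measure Ω), IsProbabilityMeasure μ₁ → IsProbabilityMeasure μ₂ →
          μ₁.map X = μ₂.map Y → RA A p X μ₁ = RA A p Y μ₂) := by
  set β : Measure ℝ → EReal := fun ν => sInf (Real.toEReal '' {m : ℝ | ν ∈ A 0 m}) with hβ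
  have key : ∀ (p : ℝ) (ν : Measure ℝ),
      sInf (Real.toEReal '' {m : ℝ | ν ∈ A p m}) = (p : EReal) + β ν := by
    intro p ν
    have hset : {m : ℝ | ν ∈ A p m} = (fun m => m + p) '' {m : ℝ | ν ∈ A 0 m} := by
      ext m
      simp only [Set.mem_setOf_eq, Set.mem_image]
      constructor
      · intro h
        refine ⟨m - p, ?_, by ring⟩
        have := hA 0 m p
        simp only [zero_add] at this
        rwa [this] at h
      · rintro ⟨m', hm', rfl⟩
        have := hA 0 (m' + p) p
        simp only [zero_add] at this
        rw [this]
        simpa using hm'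
    rw [hset, add_comm]
    have himg : Real.toEReal '' ((fun m => m + p) '' {m : ℝ | ν ∈ A 0 m}) =
        (fun x => x + (p : EReal)) '' (Real.toEReal '' {m : ℝ | ν ∈ A 0 m}) := by
      rw [← Set.image_comp, ← Set.image_comp]
      apply Set.image_congr
      intro m _
      simp [EReal.coe_add]
    rw [himg, sInf_image_add_real]
  refine ⟨β, ?_, ?_, ?_⟩
  · intro p X _ μ _
    exact key p (μ.map X)
  · intro p α X _ μ _
    rw [RA, RA, key, key, EReal.coe_add, add_assoc, add_comm (α : EReal), ← add_assoc]
  · intro p X Y _ _ μ₁ μ₂ _ _ h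
    rw [RA, RA, h]
end

section
/- Suppose K ⊆ C⁰₊(ℝ) and φ satisfies φ(f,X) = φ(f,Y) for all f ∈ K and all X, Y ∈ L(Ω,F). Then R_φ is a Value&Risk measure satisfying (CLI); that is: (1Mon) p ≤ q implies R_φ(p,X;Q) ≤ R_φ(q,X;Q); (2Mon) X ≤ Y pointwise implies R_φ(p,Y;Q) ≤ R_φ(p,X;Q); (3Mon) Q¹ ≼_X Q² implies R_φ(p,X;Q²) ≤ R_φ(p,X;Q¹); (QCo) R_φ(p,X;λQ¹+(1−λ)Q²) ≤ max{R_φ(p,X;Q¹), R_φ(p,X;Q²)} for λ ∈ (0,1); and (CLI) Q¹_X = Q²_Y implies R_φ(p,X;Q¹) = R_φ(p,Y;Q²) for all p. -/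
open MeasureTheory

/-- Expectation with the convention `E_Q[Z] = E_Q[Z⁺] − E_Q[Z⁻]`, `∞ − ∞ = −∞`
(in `EReal`, `⊤ - ⊤ = ⊥`). -/
noncomputable def eexp {Ω : Type*} [MeasurableSpace Ω] (Q : Measure Ω) (Z : Ω → ℝ) : EReal :=
  (∫⁻ ω, ENNReal.ofReal (Z ω) ∂Q).toEReal - (∫⁻ ω, ENNReal.ofReal (-Z ω) ∂Q).toEReal

/-- `Π_φ(r,X;Q) = inf {E_Q[f(X)] | f ∈ K, φ(f,X) ≥ r}`. -/
noncomputable def Pphi {Ω : Type*} [MeasurableSpace Ω] (K : Set (ℝ → ℝ))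
    (φ : (ℝ → ℝ) → (Ω → ℝ) → EReal) (Q : Measure Ω) (X : Ω → ℝ) (r : ℝ) : EReal :=
  sInf ((fun f => eexp Q (fun ω => f (X ω))) '' {f ∈ K | (r : EReal) ≤ φ f X})

/-- `R_φ(p,X;Q) = sup {s ∈ ℝ | Π_φ(s,X;Q) ≤ p}`. -/
noncomputable def Rphi {Ω : Type*} [MeasurableSpace Ω] (K : Set (ℝ → ℝ))
    (φ : (ℝ → ℝ) → (Ω → ℝ) → EReal) (Q : Measure Ω) (X : Ω → ℝ) (p : ℝ) : EReal :=
  sSup (Real.toEReal '' {s : ℝ | Pphi K φ Q X s ≤ (p : EReal)})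

open Set

section auxlemmas
variable {Ω : Type*} [MeasurableSpace Ω]

lemma eexp_mono' {Q : Measure Ω} {Z W : Ω → ℝ} (h : ∀ ω, Z ω ≤ W ω) :
    eexp Q Z ≤ eexp Q W := by
  refine EReal.sub_le_sub ?_ ?_
  · exact EReal.coe_ennreal_le_coe_ennreal_iff.2
      (lintegral_mono fun ω => ENNReal.ofReal_le_ofReal (h ω))
  · exact EReal.coe_ennreal_le_coe_ennreal_iff.2
      (lintegral_mono fun ω => ENNReal.ofReal_le_ofReal (neg_le_neg (h ω)))

lemma eexp_map' {Q : Measure Ω} {X : Ω → ℝ} (hX : Measurable X) {f : ℝ → ℝ}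
    (hf : Measurable f) :
    eexp (Q.map X) f = eexp Q (fun ω => f (X ω)) := by
  unfold eexp
  rw [lintegral_map (f := fun x => ENNReal.ofReal (f x)) (by fun_prop) hX,
    lintegral_map (f := fun x => ENNReal.ofReal (-f x)) (by fun_prop) hX]

lemma Iio_meas_le' {μ ν : Measure ℝ} (h : ∀ x, ν (Iic x) ≤ μ (Iic x)) (c : ℝ) :
    ν (Iio c) ≤ μ (Iio c) := by
  set s : ℕ → Set ℝ := fun n => Iic (c - 1 / (n + 1 : ℝ)) with hs
  have hU : (⋃ n : ℕ, s n) = Iio c := by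
    ext x
    simp only [hs, mem_iUnion, mem_Iic, mem_Iio]
    constructor
    · rintro ⟨n, hn⟩
      have h0 : (0 : ℝ) < 1 / ((n : ℝ) + 1) := by positivity
      linarith
    · intro hx
      obtain ⟨n, hn⟩ := exists_nat_one_div_lt (sub_pos.2 hx)
      exact ⟨n, by linarith⟩
  have hmono : Monotone s := by
    intro n m hnm
    apply Iic_subset_Iic.2
    have h1 : ((n : ℝ) + 1) ≤ (m : ℝ) + 1 := by
      have : (n : ℝ) ≤ m := Nat.cast_le.2 hnm
      linarith
    have : (1 : ℝ) / ((m : ℝ) + 1) ≤ 1 / ((n : ℝ) + 1) :=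
      one_div_le_one_div_of_le (by positivity) h1
    linarith
  calc ν (Iio c) = ⨆ n, ν (s n) := by
        rw [← hU, (hmono.directed_le).measure_iUnion]
    _ ≤ ⨆ n, μ (s n) := iSup_mono fun n => h _
    _ ≤ μ (Iio c) := iSup_le fun n => measure_mono (by rw [← hU]; exact subset_iUnion _ n)

lemma lowerSet_meas_le' {μ ν : Measure ℝ} [IsProbabilityMeasure μ] [IsProbabilityMeasure ν]
    (h : ∀ x, ν (Iic x) ≤ μ (Iic x)) {S : Set ℝ} (hS : IsLowerSet S) : ν S ≤ μ S := by
  rcases eq_empty_or_nonempty S with rfl | hne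
  · simp
  by_cases hb : BddAbove S
  · have hsub2 : S ⊆ Iic (sSup S) := fun x hx => le_csSup hb hx
    by_cases hc : sSup S ∈ S
    · have hSeq : S = Iic (sSup S) := Subset.antisymm hsub2 (fun x hx => hS hx hc)
      rw [hSeq]; exact h _
    · have hSeq : S = Iio (sSup S) := by
        apply Subset.antisymm
        · intro x hx
          have hle : x ≤ sSup S := hsub2 hx
          rcases lt_or_eq_of_le hle with hlt | heq
          · exact hlt
          · exact absurd (heq ▸ hx) hc
        · intro x hx
          obtain ⟨s, hsS, hxs⟩ := exists_lt_of_lt_csSup hne hx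
          exact hS hxs.le hsS
      rw [hSeq]; exact Iio_meas_le' h _
  · have hSeq : S = univ := by
      apply eq_univ_of_forall
      intro x
      obtain ⟨s, hsS, hxs⟩ := not_bddAbove_iff.1 hb x
      exact hS hxs.le hsS
    rw [hSeq]; simp

lemma upper_meas_le' {μ ν : Measure ℝ} [IsProbabilityMeasure μ] [IsProbabilityMeasure ν]
    (h : ∀ x, ν (Iic x) ≤ μ (Iic x)) {g : ℝ → ℝ} (hg : Monotone g) (t : ℝ) :
    μ {x | t < g x} ≤ ν {x | t < g x} := by
  have hset : {x | t < g x} = {x | g x ≤ t}ᶜ := by ext x; simp [not_le]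
  have hlow : IsLowerSet {x | g x ≤ t} := fun a b hba ha => le_trans (hg hba) ha
  have hm : MeasurableSet {x | g x ≤ t} := hg.measurable measurableSet_Iic
  rw [hset, measure_compl hm (measure_ne_top _ _), measure_compl hm (measure_ne_top _ _),
    measure_univ, measure_univ]
  exact tsub_le_tsub_left (lowerSet_meas_le' h hlow) 1

lemma eexp_fosd' {μ ν : Measure ℝ} [IsProbabilityMeasure μ] [IsProbabilityMeasure ν]
    (h : ∀ x, ν (Iic x) ≤ μ (Iic x)) {f : ℝ → ℝ} (hf : Monotone f) :
    eexp μ f ≤ eexp ν f := by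
  have hA : ∫⁻ x, ENNReal.ofReal (f x) ∂μ ≤ ∫⁻ x, ENNReal.ofReal (f x) ∂ν := by
    set g : ℝ → ℝ := fun x => max (f x) 0 with hgdef
    have hg : Monotone g := fun a b hab => max_le_max (hf hab) le_rfl
    have hcongr : ∀ (κ : Measure ℝ),
        ∫⁻ x, ENNReal.ofReal (f x) ∂κ = ∫⁻ x, ENNReal.ofReal (g x) ∂κ := by
      intro κ
      apply lintegral_congr
      intro x
      rcases le_total 0 (f x) with hx | hx
      · rw [hgdef]; simp only []; rw [max_eq_left hx]
      · rw [hgdef]; simp only []; rw [max_eq_right hx, ENNReal.ofReal_of_nonpos hx,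
          ENNReal.ofReal_zero]
    have hgnn : ∀ x, (0 : ℝ) ≤ g x := fun x => le_max_right _ _
    rw [hcongr μ, hcongr ν,
      lintegral_eq_lintegral_meas_lt μ (ae_of_all _ hgnn) hg.measurable.aemeasurable,
      lintegral_eq_lintegral_meas_lt ν (ae_of_all _ hgnn) hg.measurable.aemeasurable]
    exact lintegral_mono fun t => upper_meas_le' h hg t
  have hB : ∫⁻ x, ENNReal.ofReal (-f x) ∂ν ≤ ∫⁻ x, ENNReal.ofReal (-f x) ∂μ := by
    set g : ℝ → ℝ := fun x => max (-f x) 0 with hgdef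
    have hg : Antitone g := fun a b hab => max_le_max (neg_le_neg (hf hab)) le_rfl
    have hcongr : ∀ (κ : Measure ℝ),
        ∫⁻ x, ENNReal.ofReal (-f x) ∂κ = ∫⁻ x, ENNReal.ofReal (g x) ∂κ := by
      intro κ
      apply lintegral_congr
      intro x
      rcases le_total 0 (-f x) with hx | hx
      · rw [hgdef]; simp only []; rw [max_eq_left hx]
      · rw [hgdef]; simp only []; rw [max_eq_right hx, ENNReal.ofReal_of_nonpos hx,
          ENNReal.ofReal_zero]
    have hgnn : ∀ x, (0 : ℝ) ≤ g x := fun x => le_max_right _ _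
    rw [hcongr μ, hcongr ν,
      lintegral_eq_lintegral_meas_lt μ (ae_of_all _ hgnn) hg.measurable.aemeasurable,
      lintegral_eq_lintegral_meas_lt ν (ae_of_all _ hgnn) hg.measurable.aemeasurable]
    refine lintegral_mono fun t => ?_
    have hlow : IsLowerSet {x | t < g x} := fun a b hba ha => lt_of_lt_of_le ha (hg hba)
    exact lowerSet_meas_le' h hlow
  exact EReal.sub_le_sub (EReal.coe_ennreal_le_coe_ennreal_iff.2 hA)
    (EReal.coe_ennreal_le_coe_ennreal_iff.2 hB)

lemma toEReal_of_ne_top' {x : ENNReal} (hx : x ≠ ⊤) : x.toEReal = ((x.toReal : ℝ) : EReal) := by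
  conv_lhs => rw [← ENNReal.ofReal_toReal hx]
  rw [EReal.coe_ennreal_ofReal]
  exact congrArg Real.toEReal (max_eq_left ENNReal.toReal_nonneg)

lemma eexp_mix' {Q₁ Q₂ : Measure Ω}
    {l : ℝ} (hl0 : 0 < l) (hl1 : l < 1) (Z : Ω → ℝ) :
    min (eexp Q₁ Z) (eexp Q₂ Z) ≤
      eexp (ENNReal.ofReal l • Q₁ + ENNReal.ofReal (1 - l) • Q₂) Z := by
  set c := ENNReal.ofReal l with hc
  set d := ENNReal.ofReal (1 - l) with hd
  have hc0 : c ≠ 0 := by simp [hc, ENNReal.ofReal_eq_zero, not_le, hl0]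
  have hd0 : d ≠ 0 := by simp [hd, ENNReal.ofReal_eq_zero, not_le]; linarith
  have hct : c ≠ ⊤ := ENNReal.ofReal_ne_top
  have hdt : d ≠ ⊤ := ENNReal.ofReal_ne_top
  set a₁ := ∫⁻ ω, ENNReal.ofReal (Z ω) ∂Q₁ with ha₁
  set a₂ := ∫⁻ ω, ENNReal.ofReal (Z ω) ∂Q₂ with ha₂
  set b₁ := ∫⁻ ω, ENNReal.ofReal (-Z ω) ∂Q₁ with hb₁
  set b₂ := ∫⁻ ω, ENNReal.ofReal (-Z ω) ∂Q₂ with hb₂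
  have hmix : eexp (c • Q₁ + d • Q₂) Z
      = (c * a₁ + d * a₂).toEReal - (c * b₁ + d * b₂).toEReal := by
    unfold eexp
    rw [lintegral_add_measure, lintegral_add_measure, lintegral_smul_measure,
      lintegral_smul_measure, lintegral_smul_measure, lintegral_smul_measure]
    rfl
  rw [hmix]
  show min (a₁.toEReal - b₁.toEReal) (a₂.toEReal - b₂.toEReal) ≤ _
  by_cases hb1t : b₁ = ⊤
  · refine le_trans (min_le_left _ _) ?_
    rw [hb1t, EReal.coe_ennreal_top, EReal.sub_top]
    exact bot_le
  by_cases hb2t : b₂ = ⊤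
  · refine le_trans (min_le_right _ _) ?_
    rw [hb2t, EReal.coe_ennreal_top, EReal.sub_top]
    exact bot_le
  have hbmixt : c * b₁ + d * b₂ ≠ ⊤ :=
    ENNReal.add_ne_top.2 ⟨ENNReal.mul_ne_top hct hb1t, ENNReal.mul_ne_top hdt hb2t⟩
  by_cases ha1t : a₁ = ⊤
  · have : c * a₁ + d * a₂ = ⊤ := by
      rw [ha1t, ENNReal.mul_top hc0]; simp
    rw [this, EReal.coe_ennreal_top, toEReal_of_ne_top' hbmixt, EReal.top_sub_coe]
    exact le_top
  by_cases ha2t : a₂ = ⊤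
  · have h2 : c * a₁ + d * a₂ = ⊤ := by
      rw [ha2t, ENNReal.mul_top hd0]; simp
    rw [h2, EReal.coe_ennreal_top, toEReal_of_ne_top' hbmixt, EReal.top_sub_coe]
    exact le_top
  have hamixt : c * a₁ + d * a₂ ≠ ⊤ :=
    ENNReal.add_ne_top.2 ⟨ENNReal.mul_ne_top hct ha1t, ENNReal.mul_ne_top hdt ha2t⟩
  rw [toEReal_of_ne_top' hb1t, toEReal_of_ne_top' hb2t, toEReal_of_ne_top' ha1t,
    toEReal_of_ne_top' ha2t, toEReal_of_ne_top' hbmixt, toEReal_of_ne_top' hamixt,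
    ← EReal.coe_sub, ← EReal.coe_sub, ← EReal.coe_sub]
  have hAm : (c * a₁ + d * a₂).toReal = l * a₁.toReal + (1 - l) * a₂.toReal := by
    rw [ENNReal.toReal_add (ENNReal.mul_ne_top hct ha1t) (ENNReal.mul_ne_top hdt ha2t),
      ENNReal.toReal_mul, ENNReal.toReal_mul, hc, hd, ENNReal.toReal_ofReal hl0.le,
      ENNReal.toReal_ofReal (by linarith)]
  have hBm : (c * b₁ + d * b₂).toReal = l * b₁.toReal + (1 - l) * b₂.toReal := by
    rw [ENNReal.toReal_add (ENNReal.mul_ne_top hct hb1t) (ENNReal.mul_ne_top hdt hb2t),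
      ENNReal.toReal_mul, ENNReal.toReal_mul, hc, hd, ENNReal.toReal_ofReal hl0.le,
      ENNReal.toReal_ofReal (by linarith)]
  rw [hAm, hBm]
  rcases le_total (a₁.toReal - b₁.toReal) (a₂.toReal - b₂.toReal) with hle | hle
  · refine le_trans (min_le_left _ _) (EReal.coe_le_coe_iff.2 ?_)
    nlinarith
  · refine le_trans (min_le_right _ _) (EReal.coe_le_coe_iff.2 ?_)
    nlinarith

/-- Core comparison: if constraint sets match and expectations compare, `Rphi` compares. -/
lemma Rphi_le_of' {K : Set (ℝ → ℝ)} {φ : (ℝ → ℝ) → (Ω → ℝ) → EReal}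
    {Q Q' : Measure Ω} {X X' : Ω → ℝ}
    (hc : ∀ f ∈ K, φ f X = φ f X')
    (h : ∀ f ∈ K, eexp Q' (fun ω => f (X' ω)) ≤ eexp Q (fun ω => f (X ω))) (p : ℝ) :
    Rphi K φ Q X p ≤ Rphi K φ Q' X' p := by
  apply sSup_le_sSup
  apply Set.image_mono
  intro s hs
  simp only [Set.mem_setOf_eq] at hs ⊢
  refine le_trans ?_ hs
  apply le_sInf
  rintro x ⟨f, ⟨hfK, hfs⟩, rfl⟩
  exact sInf_le_of_le ⟨f, ⟨hfK, (hc f hfK) ▸ hfs⟩, rfl⟩ (h f hfK)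

end auxlemmas

theorem stmt9 {Ω : Type*} [m0 : MeasurableSpace Ω] [TopologicalSpace Ω] [PolishSpace Ω]
    (hF : m0 ≤ borel Ω)
    (K : Set (ℝ → ℝ)) (hK : ∀ f ∈ K, Continuous f ∧ Monotone f)
    (φ : (ℝ → ℝ) → (Ω → ℝ) → EReal)
    (hφ : ∀ f ∈ K, ∀ X Y : Ω → ℝ, φ f X = φ f Y) :
    -- (1Mon)
    (∀ (p q : ℝ), p ≤ q → ∀ (X : Ω → ℝ), Measurable X →
      ∀ (Q : Measure Ω), IsProbabilityMeasure Q → Rphi K φ Q X p ≤ Rphi K φ Q X q) ∧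
    -- (2Mon)
    (∀ (p : ℝ) (X Y : Ω → ℝ), Measurable X → Measurable Y → (∀ ω, X ω ≤ Y ω) →
      ∀ (Q : Measure Ω), IsProbabilityMeasure Q → Rphi K φ Q Y p ≤ Rphi K φ Q X p) ∧
    -- (3Mon): `Q¹ ≼_X Q²` implies `R_φ(p,X;Q²) ≤ R_φ(p,X;Q¹)`
    (∀ (p : ℝ) (X : Ω → ℝ), Measurable X →
      ∀ (Q₁ Q₂ : Measure Ω), IsProbabilityMeasure Q₁ → IsProbabilityMeasure Q₂ →
        (∀ x : ℝ, (Q₂.map X) (Set.Iic x) ≤ (Q₁.map X) (Set.Iic x)) →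
        Rphi K φ Q₂ X p ≤ Rphi K φ Q₁ X p) ∧
    -- (QCo)
    (∀ (p : ℝ) (X : Ω → ℝ), Measurable X →
      ∀ (Q₁ Q₂ : Measure Ω), IsProbabilityMeasure Q₁ → IsProbabilityMeasure Q₂ →
        ∀ l : ℝ, 0 < l → l < 1 →
          Rphi K φ (ENNReal.ofReal l • Q₁ + ENNReal.ofReal (1 - l) • Q₂) X p ≤
            max (Rphi K φ Q₁ X p) (Rphi K φ Q₂ X p)) ∧
    -- (CLI)
    (∀ (p : ℝ) (X Y : Ω → ℝ), Measurable X → Measurable Y →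
      ∀ (Q₁ Q₂ : Measure Ω), IsProbabilityMeasure Q₁ → IsProbabilityMeasure Q₂ →
        Q₁.map X = Q₂.map Y → Rphi K φ Q₁ X p = Rphi K φ Q₂ Y p) := by
  refine ⟨?_, ?_, ?_, ?_, ?_⟩
  · -- (1Mon)
    intro p q hpq X _ Q _
    apply sSup_le_sSup
    apply Set.image_mono
    intro s hs
    simp only [Set.mem_setOf_eq] at hs ⊢
    exact le_trans hs (EReal.coe_le_coe_iff.2 hpq)
  · -- (2Mon)
    intro p X Y hX hY hXY Q hQ
    refine Rphi_le_of' (fun f hf => hφ f hf Y X) (fun f hf => ?_) p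
    exact eexp_mono' (fun ω => (hK f hf).2 (hXY ω))
  · -- (3Mon)
    intro p X hX Q₁ Q₂ hQ₁ hQ₂ hdom
    haveI : IsProbabilityMeasure (Q₁.map X) := Measure.isProbabilityMeasure_map hX.aemeasurable
    haveI : IsProbabilityMeasure (Q₂.map X) := Measure.isProbabilityMeasure_map hX.aemeasurable
    refine Rphi_le_of' (fun f hf => rfl) (fun f hf => ?_) p
    have hfm : Measurable f := (hK f hf).1.measurable
    rw [← eexp_map' hX hfm, ← eexp_map' hX hfm]
    exact eexp_fosd' hdom (hK f hf).2
  · -- (QCo)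
    intro p X hX Q₁ Q₂ hQ₁ hQ₂ l hl0 hl1
    set Qm := ENNReal.ofReal l • Q₁ + ENNReal.ofReal (1 - l) • Q₂ with hQm
    have key : ∀ s : ℝ, Pphi K φ Qm X s ≤ (p : EReal) →
        Pphi K φ Q₁ X s ≤ (p : EReal) ∨ Pphi K φ Q₂ X s ≤ (p : EReal) := by
      intro s hs
      have hmin : min (Pphi K φ Q₁ X s) (Pphi K φ Q₂ X s) ≤ Pphi K φ Qm X s := by
        apply le_sInf
        rintro x ⟨f, hf, rfl⟩
        refine le_trans (min_le_min (sInf_le ⟨f, hf, rfl⟩) (sInf_le ⟨f, hf, rfl⟩)) ?_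
        exact eexp_mix' hl0 hl1 _
      exact min_le_iff.1 (le_trans hmin hs)
    calc Rphi K φ Qm X p
        ≤ sSup (Real.toEReal '' ({s : ℝ | Pphi K φ Q₁ X s ≤ (p : EReal)} ∪
            {s : ℝ | Pphi K φ Q₂ X s ≤ (p : EReal)})) := by
          apply sSup_le_sSup
          apply Set.image_mono
          intro s hs
          exact key s hs
      _ = Rphi K φ Q₁ X p ⊔ Rphi K φ Q₂ X p := by
          rw [Set.image_union, sSup_union]; rfl
      _ ≤ max (Rphi K φ Q₁ X p) (Rphi K φ Q₂ X p) :=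
          sup_le (le_max_left _ _) (le_max_right _ _)
  · -- (CLI)
    intro p X Y hX hY Q₁ Q₂ hQ₁ hQ₂ hmap
    have he : ∀ f ∈ K, eexp Q₁ (fun ω => f (X ω)) = eexp Q₂ (fun ω => f (Y ω)) := by
      intro f hf
      have hfm : Measurable f := (hK f hf).1.measurable
      rw [← eexp_map' hX hfm, ← eexp_map' hY hfm, hmap]
    exact le_antisymm
      (Rphi_le_of' (fun f hf => hφ f hf X Y) (fun f hf => (he f hf).ge) p)
      (Rphi_le_of' (fun f hf => hφ f hf Y X) (fun f hf => (he f hf).le) p)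
end

section
/- Suppose K ⊆ {f ∈ C⁰₊(ℝ) | f concave} and φ satisfies φ(f,X) = φ(f,Y) for all f ∈ K and all X, Y ∈ L(Ω,F). Then R_φ satisfies (QCoX): for every p ∈ ℝ, Q ∈ P(Ω), X₁, X₂ ∈ L(Ω,F) and λ ∈ (0,1), R_φ(p, λX₁+(1−λ)X₂; Q) ≤ max{R_φ(p,X₁;Q), R_φ(p,X₂;Q)}. -/
open MeasureTheory
open scoped ENNReal NNReal

namespace Stmt10Aux

lemma nnnorm_split (z : ℝ) :
    (‖z‖₊ : ℝ≥0∞) = ENNReal.ofReal z + ENNReal.ofReal (-z) := by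
  rcases le_total 0 z with h | h
  · rw [ENNReal.ofReal_eq_zero.2 (by linarith : -z ≤ 0), add_zero,
      ← ENNReal.ofReal_coe_nnreal, coe_nnnorm, Real.norm_of_nonneg h]
  · rw [ENNReal.ofReal_eq_zero.2 h, zero_add,
      ← ENNReal.ofReal_coe_nnreal, coe_nnnorm, Real.norm_of_nonpos h]

lemma ennreal_toEReal_eq {x : ℝ≥0∞} (hx : x ≠ ⊤) :
    x.toEReal = ((x.toReal : ℝ) : EReal) := by
  lift x to NNReal using hx
  rw [EReal.coe_nnreal_eq_coe_real, ENNReal.coe_toReal]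

lemma eexp_mono {Ω : Type*} [MeasurableSpace Ω] (Q : Measure Ω) {Z W : Ω → ℝ}
    (h : ∀ ω, Z ω ≤ W ω) : eexp Q Z ≤ eexp Q W := by
  refine EReal.sub_le_sub ?_ ?_
  · exact EReal.coe_ennreal_le_coe_ennreal_iff.2
      (lintegral_mono fun ω => ENNReal.ofReal_le_ofReal (h ω))
  · exact EReal.coe_ennreal_le_coe_ennreal_iff.2
      (lintegral_mono fun ω => ENNReal.ofReal_le_ofReal (by linarith [h ω]))

lemma eexp_eq_bot {Ω : Type*} [MeasurableSpace Ω] (Q : Measure Ω) {Z : Ω → ℝ}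
    (h : ∫⁻ ω, ENNReal.ofReal (-Z ω) ∂Q = ⊤) : eexp Q Z = ⊥ := by
  unfold eexp
  rw [h, EReal.coe_ennreal_top, EReal.sub_top]

lemma eexp_eq_integral {Ω : Type*} [MeasurableSpace Ω] (Q : Measure Ω) {Z : Ω → ℝ}
    (hZ : Measurable Z) (hP : ∫⁻ ω, ENNReal.ofReal (Z ω) ∂Q ≠ ⊤)
    (hN : ∫⁻ ω, ENNReal.ofReal (-Z ω) ∂Q ≠ ⊤) :
    Integrable Z Q ∧ eexp Q Z = ((∫ ω, Z ω ∂Q : ℝ) : EReal) := by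
  have hmeas : Measurable fun ω => ENNReal.ofReal (Z ω) :=
    ENNReal.measurable_ofReal.comp hZ
  have hInt : Integrable Z Q := by
    refine ⟨hZ.aestronglyMeasurable, ?_⟩
    rw [HasFiniteIntegral]
    calc ∫⁻ ω, (‖Z ω‖₊ : ℝ≥0∞) ∂Q
        = ∫⁻ ω, (ENNReal.ofReal (Z ω) + ENNReal.ofReal (-Z ω)) ∂Q := by
          simp_rw [nnnorm_split]
      _ = (∫⁻ ω, ENNReal.ofReal (Z ω) ∂Q) + ∫⁻ ω, ENNReal.ofReal (-Z ω) ∂Q :=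
          lintegral_add_left hmeas _
      _ < ⊤ := ENNReal.add_lt_top.2 ⟨(lt_top_iff_ne_top.2 hP), (lt_top_iff_ne_top.2 hN)⟩
  refine ⟨hInt, ?_⟩
  rw [integral_eq_lintegral_pos_part_sub_lintegral_neg_part hInt]
  unfold eexp
  rw [ennreal_toEReal_eq hP, ennreal_toEReal_eq hN, ← EReal.coe_sub]

lemma lintegral_ofReal_const_mul {Ω : Type*} [MeasurableSpace Ω] (Q : Measure Ω)
    {Z : Ω → ℝ} (hZ : Measurable Z) {c : ℝ} (hc : 0 ≤ c) :
    ∫⁻ ω, ENNReal.ofReal (c * Z ω) ∂Q = ENNReal.ofReal c * ∫⁻ ω, ENNReal.ofReal (Z ω) ∂Q := by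
  simp_rw [fun ω => ENNReal.ofReal_mul (p := c) (q := Z ω) hc]
  exact lintegral_const_mul _ (ENNReal.measurable_ofReal.comp hZ)

lemma min_eexp_le {Ω : Type*} [MeasurableSpace Ω] (Q : Measure Ω)
    {A B : Ω → ℝ} (hA : Measurable A) (hB : Measurable B)
    {l : ℝ} (hl0 : 0 < l) (hl1 : l < 1) :
    min (eexp Q A) (eexp Q B) ≤ eexp Q (fun ω => l * A ω + (1 - l) * B ω) := by
  have hl1' : (0:ℝ) < 1 - l := by linarith
  set W : Ω → ℝ := fun ω => l * A ω + (1 - l) * B ω with hWdef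
  have hW : Measurable W := ((hA.const_mul l).add (hB.const_mul (1 - l)))
  set PA := ∫⁻ ω, ENNReal.ofReal (A ω) ∂Q with hPA
  set NA := ∫⁻ ω, ENNReal.ofReal (-A ω) ∂Q with hNA
  set PB := ∫⁻ ω, ENNReal.ofReal (B ω) ∂Q with hPB
  set NB := ∫⁻ ω, ENNReal.ofReal (-B ω) ∂Q with hNB
  set PW := ∫⁻ ω, ENNReal.ofReal (W ω) ∂Q with hPW
  set NW := ∫⁻ ω, ENNReal.ofReal (-W ω) ∂Q with hNW
  by_cases hNAt : NA = ⊤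
  · exact (min_le_left _ _).trans ((eexp_eq_bot Q hNAt).le.trans bot_le)
  by_cases hNBt : NB = ⊤
  · exact (min_le_right _ _).trans ((eexp_eq_bot Q hNBt).le.trans bot_le)
  -- NW is finite
  have hNWfin : NW ≠ ⊤ := by
    have hle : NW ≤ ENNReal.ofReal l * NA + ENNReal.ofReal (1 - l) * NB := by
      calc NW ≤ ∫⁻ ω, (ENNReal.ofReal (l * (-A ω)) + ENNReal.ofReal ((1 - l) * (-B ω))) ∂Q := by
            refine lintegral_mono fun ω => ?_
            have hpt : -W ω = l * (-A ω) + (1 - l) * (-B ω) := by simp [hWdef]; ring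
            rw [hpt]
            exact ENNReal.ofReal_add_le
        _ = (∫⁻ ω, ENNReal.ofReal (l * (-A ω)) ∂Q) + ∫⁻ ω, ENNReal.ofReal ((1 - l) * (-B ω)) ∂Q := by
            refine lintegral_add_left ?_ _
            have : Measurable fun ω => l * (-A ω) := (hA.neg.const_mul l)
            exact ENNReal.measurable_ofReal.comp this
        _ = ENNReal.ofReal l * NA + ENNReal.ofReal (1 - l) * NB := by
            rw [lintegral_ofReal_const_mul Q (Z := fun ω => -A ω) hA.neg hl0.le,
              lintegral_ofReal_const_mul Q (Z := fun ω => -B ω) hB.neg hl1'.le]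
    intro h
    rw [h] at hle
    exact (ENNReal.add_lt_top.2 ⟨ENNReal.mul_lt_top ENNReal.ofReal_lt_top (lt_top_iff_ne_top.2 hNAt),
      ENNReal.mul_lt_top ENNReal.ofReal_lt_top (lt_top_iff_ne_top.2 hNBt)⟩).ne (top_le_iff.1 hle)
  by_cases hPWt : PW = ⊤
  · -- eexp W = ⊤
    have : eexp Q W = ⊤ := by
      unfold eexp
      rw [← hPW, ← hNW, hPWt, EReal.coe_ennreal_top, ennreal_toEReal_eq hNWfin,
        EReal.top_sub_coe]
    rw [this]; exact le_top
  -- all finite case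
  have key : ∀ (C D : Ω → ℝ) (hC : Measurable C) (hD : Measurable D) (c : ℝ), 0 < c → c < 1 →
      (∀ ω, c * C ω = W ω + (1 - c) * (-D ω)) →
      (∫⁻ ω, ENNReal.ofReal (-D ω) ∂Q) ≠ ⊤ → (∫⁻ ω, ENNReal.ofReal (C ω) ∂Q) ≠ ⊤ := by
    intro C D hC hD c hc hc1 hpt hDfin hCt
    have h1 : ENNReal.ofReal c * ∫⁻ ω, ENNReal.ofReal (C ω) ∂Q
        ≤ PW + ENNReal.ofReal (1 - c) * ∫⁻ ω, ENNReal.ofReal (-D ω) ∂Q := by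
      calc ENNReal.ofReal c * ∫⁻ ω, ENNReal.ofReal (C ω) ∂Q
          = ∫⁻ ω, ENNReal.ofReal (c * C ω) ∂Q := (lintegral_ofReal_const_mul Q hC hc.le).symm
        _ ≤ ∫⁻ ω, (ENNReal.ofReal (W ω) + ENNReal.ofReal ((1 - c) * (-D ω))) ∂Q := by
            refine lintegral_mono fun ω => ?_
            rw [hpt ω]
            exact ENNReal.ofReal_add_le
        _ = PW + ∫⁻ ω, ENNReal.ofReal ((1 - c) * (-D ω)) ∂Q :=
            lintegral_add_left (ENNReal.measurable_ofReal.comp hW) _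
        _ = PW + ENNReal.ofReal (1 - c) * ∫⁻ ω, ENNReal.ofReal (-D ω) ∂Q := by
            rw [lintegral_ofReal_const_mul Q (Z := fun ω => -D ω) hD.neg (by linarith : (0:ℝ) ≤ 1 - c)]
    rw [hCt, ENNReal.mul_top (by simpa using hc)] at h1
    have h2 : PW + ENNReal.ofReal (1 - c) * ∫⁻ ω, ENNReal.ofReal (-D ω) ∂Q < ⊤ :=
      ENNReal.add_lt_top.2 ⟨(lt_top_iff_ne_top.2 hPWt), ENNReal.mul_lt_top ENNReal.ofReal_lt_top (lt_top_iff_ne_top.2 hDfin)⟩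
    exact h2.ne (top_le_iff.1 h1)
  have hPAt : PA ≠ ⊤ := key A B hA hB l hl0 hl1 (fun ω => by simp only [hWdef]; ring) hNBt
  have hPBt : PB ≠ ⊤ := key B A hB hA (1 - l) hl1' (by linarith) (fun ω => by simp only [hWdef]; ring) hNAt
  obtain ⟨hIA, hEA⟩ := eexp_eq_integral Q hA hPAt hNAt
  obtain ⟨hIB, hEB⟩ := eexp_eq_integral Q hB hPBt hNBt
  have hIW : Integrable W Q := (hIA.const_mul l).add (hIB.const_mul (1 - l))
  have hPWfin : PW ≠ ⊤ := hPWt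
  obtain ⟨_, hEW⟩ := eexp_eq_integral Q hW hPWfin hNWfin
  rw [hEA, hEB, hEW]
  have hWint : ∫ ω, W ω ∂Q = l * ∫ ω, A ω ∂Q + (1 - l) * ∫ ω, B ω ∂Q := by
    rw [hWdef]
    rw [integral_add (hIA.const_mul l) (hIB.const_mul (1 - l)),
      integral_const_mul, integral_const_mul]
  rw [hWint]
  have hmin : min (∫ ω, A ω ∂Q) (∫ ω, B ω ∂Q) ≤ l * ∫ ω, A ω ∂Q + (1 - l) * ∫ ω, B ω ∂Q := by
    nlinarith [min_le_left (∫ ω, A ω ∂Q) (∫ ω, B ω ∂Q),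
      min_le_right (∫ ω, A ω ∂Q) (∫ ω, B ω ∂Q)]
  calc min ((∫ ω, A ω ∂Q : ℝ) : EReal) ((∫ ω, B ω ∂Q : ℝ) : EReal)
      = ((min (∫ ω, A ω ∂Q) (∫ ω, B ω ∂Q) : ℝ) : EReal) :=
        (Monotone.map_min (fun _ _ h => EReal.coe_le_coe_iff.2 h)).symm
    _ ≤ _ := EReal.coe_le_coe_iff.2 hmin

end Stmt10Aux

theorem stmt10 {Ω : Type*} [m0 : MeasurableSpace Ω] [TopologicalSpace Ω] [PolishSpace Ω]
    (hF : m0 ≤ borel Ω)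
    (K : Set (ℝ → ℝ))
    (hK : ∀ f ∈ K, Continuous f ∧ Monotone f ∧ ConcaveOn ℝ Set.univ f)
    (φ : (ℝ → ℝ) → (Ω → ℝ) → EReal)
    (hφ : ∀ f ∈ K, ∀ X Y : Ω → ℝ, φ f X = φ f Y) :
    -- (QCoX)
    ∀ (p : ℝ) (Q : Measure Ω), IsProbabilityMeasure Q →
      ∀ (X₁ X₂ : Ω → ℝ), Measurable X₁ → Measurable X₂ →
        ∀ l : ℝ, 0 < l → l < 1 →
          Rphi K φ Q (fun ω => l * X₁ ω + (1 - l) * X₂ ω) p ≤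
            max (Rphi K φ Q X₁ p) (Rphi K φ Q X₂ p) := by
  intro p Q hQ X₁ X₂ hX₁ hX₂ l hl0 hl1
  set W : Ω → ℝ := fun ω => l * X₁ ω + (1 - l) * X₂ ω with hWdef
  apply sSup_le
  rintro x ⟨s, hs, rfl⟩
  have hmin : min (Pphi K φ Q X₁ s) (Pphi K φ Q X₂ s) ≤ Pphi K φ Q W s := by
    apply le_sInf
    rintro y ⟨f, ⟨hfK, hfφ⟩, rfl⟩
    obtain ⟨hfc, hfm, hconc⟩ := hK f hfK
    have hpt : ∀ ω, l * f (X₁ ω) + (1 - l) * f (X₂ ω) ≤ f (W ω) := by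
      intro ω
      have := hconc.2 (Set.mem_univ (X₁ ω)) (Set.mem_univ (X₂ ω)) hl0.le
        (by linarith : (0:ℝ) ≤ 1 - l) (by ring)
      simpa [smul_eq_mul, hWdef] using this
    have h1 : eexp Q (fun ω => l * f (X₁ ω) + (1 - l) * f (X₂ ω))
        ≤ eexp Q (fun ω => f (W ω)) := Stmt10Aux.eexp_mono Q hpt
    have h2 := Stmt10Aux.min_eexp_le Q (hfc.measurable.comp hX₁) (hfc.measurable.comp hX₂)
      hl0 hl1
    refine le_trans (min_le_min ?_ ?_) (h2.trans h1)
    · exact sInf_le ⟨f, ⟨hfK, by rw [hφ f hfK X₁ W]; exact hfφ⟩, rfl⟩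
    · exact sInf_le ⟨f, ⟨hfK, by rw [hφ f hfK X₂ W]; exact hfφ⟩, rfl⟩
  rcases min_le_iff.1 (hmin.trans hs) with h | h
  · exact le_max_of_le_left (le_sSup ⟨s, h, rfl⟩)
  · exact le_max_of_le_right (le_sSup ⟨s, h, rfl⟩)
end

section
/- For every K ⊆ L∞(Ω,F), every φ : K → ℝ ∪ {±∞}, every μ ∈ ca(Ω) and every p ∈ ℝ, the right-continuous version of H_φ coincides with R_φ: H_φ⁺(p,μ) := inf_{s>p} H_φ(s,μ) = R_φ(p,μ). -/
open MeasureTheory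

/-- Integral of a function against a finite signed measure, via the Jordan decomposition:
`∫ Y dμ = ∫ Y dμ⁺ − ∫ Y dμ⁻`. -/
noncomputable def sInt {Ω : Type*} [MeasurableSpace Ω]
    (μ : SignedMeasure Ω) (Y : Ω → ℝ) : ℝ :=
  (∫ ω, Y ω ∂μ.toJordanDecomposition.posPart) - (∫ ω, Y ω ∂μ.toJordanDecomposition.negPart)

/-- `Π_φ(r,μ) = inf {∫ Y dμ | Y ∈ K, φ(Y) ≥ r}`. -/
noncomputable def PiS {Ω : Type*} [MeasurableSpace Ω] (K : Set (Ω → ℝ))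
    (φ : (Ω → ℝ) → EReal) (μ : SignedMeasure Ω) (r : ℝ) : EReal :=
  sInf ((fun Y => ((sInt μ Y : ℝ) : EReal)) '' {Y ∈ K | (r : EReal) ≤ φ Y})

/-- `R_φ(p,μ) = sup {r ∈ ℝ | Π_φ(r,μ) ≤ p}`. -/
noncomputable def RS {Ω : Type*} [MeasurableSpace Ω] (K : Set (Ω → ℝ))
    (φ : (Ω → ℝ) → EReal) (μ : SignedMeasure Ω) (p : ℝ) : EReal :=
  sSup (Real.toEReal '' {r : ℝ | PiS K φ μ r ≤ (p : EReal)})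

/-- `H_φ(p,μ) = sup {φ(ξ) | ξ ∈ K, ∫ ξ dμ ≤ p}`. -/
noncomputable def HS {Ω : Type*} [MeasurableSpace Ω] (K : Set (Ω → ℝ))
    (φ : (Ω → ℝ) → EReal) (μ : SignedMeasure Ω) (p : ℝ) : EReal :=
  sSup (φ '' {ξ ∈ K | sInt μ ξ ≤ p})

theorem stmt16 {Ω : Type*} [MeasurableSpace Ω] [TopologicalSpace Ω] [PolishSpace Ω]
    [BorelSpace Ω]
    (K : Set (Ω → ℝ))
    (hK : ∀ Y ∈ K, Measurable Y ∧ ∃ C : ℝ, ∀ ω, |Y ω| ≤ C)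
    (φ : (Ω → ℝ) → EReal)
    (μ : SignedMeasure Ω) (p : ℝ) :
    (⨅ (s : ℝ) (_ : p < s), HS K φ μ s) = RS K φ μ p := by
  apply le_antisymm
  · -- H⁺ ≤ R
    by_contra h
    push_neg at h
    obtain ⟨q, hq1, hq2⟩ := EReal.exists_between_coe_real h
    -- for all s > p, q < HS s, hence PiS q ≤ s
    have hPi : PiS K φ μ q ≤ (p : EReal) := by
      by_contra hP
      push_neg at hP
      obtain ⟨s, hs1, hs2⟩ := EReal.exists_between_coe_real hP
      have hqH : (q : EReal) < HS K φ μ s := lt_of_lt_of_le hq2 (by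
        refine iInf₂_le s ?_
        exact_mod_cast hs1)
      rw [HS, lt_sSup_iff] at hqH
      obtain ⟨v, hv, hqv⟩ := hqH
      obtain ⟨ξ, ⟨hξK, hξi⟩, rfl⟩ := hv
      have : PiS K φ μ q ≤ ((sInt μ ξ : ℝ) : EReal) :=
        sInf_le ⟨ξ, ⟨hξK, le_of_lt hqv⟩, rfl⟩
      have : PiS K φ μ q ≤ (s : EReal) := this.trans (by exact_mod_cast hξi)
      exact absurd (this.trans_lt hs2) (lt_irrefl _)
    exact absurd (le_sSup ⟨q, hPi, rfl⟩ : (q:EReal) ≤ RS K φ μ p) (not_le.2 hq1)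
  · -- R ≤ H⁺
    refine sSup_le ?_
    rintro _ ⟨r, hr, rfl⟩
    refine le_iInf₂ fun s hs => ?_
    have hlt : PiS K φ μ r < (s : EReal) :=
      lt_of_le_of_lt hr (by exact_mod_cast hs)
    rw [PiS, sInf_lt_iff] at hlt
    obtain ⟨v, hv, hvs⟩ := hlt
    obtain ⟨Y, ⟨hYK, hYφ⟩, rfl⟩ := hv
    have hYs : sInt μ Y ≤ s := le_of_lt (by simpa using (EReal.coe_lt_coe_iff.1 hvs))
    exact hYφ.trans (le_sSup ⟨Y, ⟨hYK, hYs⟩, rfl⟩)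
end

section
/- Let Φ : P(ℝ) → ℝ ∪ {+∞} be monotone decreasing with respect to first-order stochastic dominance (P ≼₁ Q implies Φ(P) ≥ Φ(Q)), quasiconvex (Φ(λP+(1−λ)Q) ≤ max{Φ(P),Φ(Q)} for λ ∈ [0,1]), and lower semicontinuous with respect to the weak topology σ(P(ℝ),C_b(ℝ)). Define V(a,f) := sup{∫f dQ | Q ∈ P(ℝ), Φ(Q) ≤ a} for a ∈ ℝ, f ∈ C_b(ℝ), and V⁻¹(v,f) := inf{a ∈ ℝ | V(a,f) ≥ v}. Then for every P ∈ P(ℝ): Φ(P) = sup{V⁻¹(∫f dP, f) | f ∈ C_b(ℝ), f decreasing}. -/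
open MeasureTheory

namespace Stmt19Aux

open Filter Topology Set BoundedContinuousFunction
open scoped ENNReal NNReal


noncomputable def env (f : ℝ →ᵇ ℝ) (x : ℝ) : ℝ := sSup (⇑f '' Set.Ici x)

lemma env_bddAbove (f : ℝ →ᵇ ℝ) (x : ℝ) : BddAbove (⇑f '' Set.Ici x) := by
  refine ⟨‖f‖, ?_⟩
  rintro _ ⟨y, -, rfl⟩
  have h := f.norm_coe_le_norm y
  rw [Real.norm_eq_abs] at h
  exact (abs_le.mp h).2

lemma le_env (f : ℝ →ᵇ ℝ) {x y : ℝ} (h : x ≤ y) : f y ≤ env f x :=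
  le_csSup (env_bddAbove f x) ⟨y, h, rfl⟩

lemma env_le (f : ℝ →ᵇ ℝ) {x B : ℝ} (h : ∀ y, x ≤ y → f y ≤ B) : env f x ≤ B :=
  csSup_le ⟨f x, ⟨x, Set.self_mem_Ici, rfl⟩⟩ (by rintro _ ⟨y, hy, rfl⟩; exact h y hy)

lemma env_antitone (f : ℝ →ᵇ ℝ) : Antitone (env f) :=
  fun _ _ hab => env_le f fun y hy => le_env f (hab.trans hy)

lemma abs_env_le (f : ℝ →ᵇ ℝ) (x : ℝ) : |env f x| ≤ ‖f‖ := by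
  rw [abs_le]
  constructor
  · have h1 := le_env f (le_refl x)
    have h2 := f.norm_coe_le_norm x
    rw [Real.norm_eq_abs] at h2
    have := (abs_le.mp h2).1
    linarith
  · refine env_le f fun y _ => ?_
    have h2 := f.norm_coe_le_norm y
    rw [Real.norm_eq_abs] at h2
    exact (abs_le.mp h2).2

lemma env_continuous (f : ℝ →ᵇ ℝ) : Continuous (env f) := by
  rw [continuous_iff_continuousAt]
  intro x0
  rw [Metric.continuousAt_iff]
  intro ε hε
  obtain ⟨δ, hδ, hf⟩ := Metric.continuousAt_iff.mp (f.continuous.continuousAt (x := x0)) (ε/4)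
    (by linarith)
  refine ⟨δ, hδ, fun {x} hx => ?_⟩
  rw [Real.dist_eq] at hx ⊢
  have hb : ∀ y, |y - x0| < δ → |f y - f x0| < ε/4 := by
    intro y hy
    have := hf (show dist y x0 < δ by rwa [Real.dist_eq])
    rwa [Real.dist_eq] at this
  have hd := abs_lt.mp hx
  rcases le_total x x0 with h | h
  · have h1 : env f x0 ≤ env f x := env_antitone f h
    have h2 : env f x ≤ env f x0 + ε/2 := by
      refine env_le f fun y hy => ?_
      rcases le_total x0 y with h' | h'
      · exact (le_env f h').trans (by linarith)
      · have hyd : |y - x0| < δ := abs_lt.mpr ⟨by linarith, by linarith⟩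
        have h3 := (abs_lt.mp (hb y hyd)).2
        have h4 := le_env f (le_refl x0)
        linarith
    rw [abs_lt]
    exact ⟨by linarith, by linarith⟩
  · have h1 : env f x ≤ env f x0 := env_antitone f h
    have h2 : env f x0 ≤ env f x + ε/2 := by
      refine env_le f fun y hy => ?_
      rcases le_total x y with h' | h'
      · exact (le_env f h').trans (by linarith)
      · have hyd : |y - x0| < δ := abs_lt.mpr ⟨by linarith, by linarith⟩
        have h3 := abs_lt.mp (hb y hyd)
        have h4 := abs_lt.mp (hb x hx)
        have h5 := le_env f (le_refl x)
        linarith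
    rw [abs_lt]
    exact ⟨by linarith, by linarith⟩

noncomputable def envBCF (f : ℝ →ᵇ ℝ) : ℝ →ᵇ ℝ :=
  BoundedContinuousFunction.ofNormedAddCommGroup (env f) (env_continuous f) ‖f‖
    (fun x => by rw [Real.norm_eq_abs]; exact abs_env_le f x)

@[simp] lemma envBCF_apply (f : ℝ →ᵇ ℝ) (x : ℝ) : envBCF f x = env f x := rfl





noncomputable def rat (n : ℕ) : ℝ := (((Denumerable.eqv ℚ).symm n : ℚ) : ℝ)

lemma exists_rat_eq (q : ℚ) : ∃ n, rat n = (q : ℝ) :=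
  ⟨Denumerable.eqv ℚ q, by rw [rat, Equiv.symm_apply_apply]⟩

noncomputable def apx (f : ℝ →ᵇ ℝ) : ℕ → ℝ → ℝ
  | 0 => ⇑f
  | n + 1 => fun x => if x ≤ rat n then max (apx f n x) (f (rat n)) else apx f n x

lemma apx_measurable (f : ℝ →ᵇ ℝ) (n : ℕ) : Measurable (apx f n) := by
  induction n with
  | zero => exact f.continuous.measurable
  | succ n ih =>
    exact Measurable.ite measurableSet_Iic (ih.max measurable_const) ih

lemma apx_mono_succ (f : ℝ →ᵇ ℝ) (n : ℕ) (x : ℝ) : apx f n x ≤ apx f (n + 1) x := by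
  simp only [apx]
  split <;> simp

lemma coe_le_apx (f : ℝ →ᵇ ℝ) (n : ℕ) (x : ℝ) : f x ≤ apx f n x := by
  induction n with
  | zero => exact le_rfl
  | succ n ih => exact ih.trans (apx_mono_succ f n x)

lemma apx_le_env (f : ℝ →ᵇ ℝ) (n : ℕ) (x : ℝ) : apx f n x ≤ env f x := by
  induction n with
  | zero => exact le_env f le_rfl
  | succ n ih =>
    simp only [apx]
    split
    · next h => exact max_le ih (le_env f h)
    · exact ih

lemma abs_apx_le (f : ℝ →ᵇ ℝ) (n : ℕ) (x : ℝ) : |apx f n x| ≤ ‖f‖ := by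
  rw [abs_le]
  constructor
  · have h1 := coe_le_apx f n x
    have h2 := f.norm_coe_le_norm x
    rw [Real.norm_eq_abs] at h2
    have := (abs_le.mp h2).1
    linarith
  · exact (apx_le_env f n x).trans ((abs_le.mp (abs_env_le f x)).2)

lemma apx_mono (f : ℝ →ᵇ ℝ) (x : ℝ) : Monotone fun n => apx f n x :=
  monotone_nat_of_le_succ fun n => apx_mono_succ f n x

lemma tendsto_apx (f : ℝ →ᵇ ℝ) (x : ℝ) :
    Tendsto (fun n => apx f n x) atTop (𝓝 (env f x)) := by
  have hb : BddAbove (Set.range fun n => apx f n x) :=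
    ⟨env f x, by rintro _ ⟨n, rfl⟩; exact apx_le_env f n x⟩
  have h := tendsto_atTop_ciSup (apx_mono f x) hb
  have he : (⨆ n, apx f n x) = env f x := by
    refine le_antisymm (ciSup_le fun n => apx_le_env f n x) ?_
    refine env_le f fun y hy => ?_
    rcases eq_or_lt_of_le hy with rfl | hlt
    · exact le_ciSup hb 0
    · refine le_of_forall_pos_le_add fun ε hε => ?_
      obtain ⟨δ, hδ, hfc⟩ := Metric.continuousAt_iff.mp (f.continuous.continuousAt (x := y)) ε hε
      set δ' := min δ (y - x) with hδ'
      have hδ'0 : 0 < δ' := lt_min hδ (by linarith)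
      obtain ⟨q, hq1, hq2⟩ := exists_rat_btwn (show y - δ' < y by linarith)
      obtain ⟨n, hn⟩ := exists_rat_eq q
      have hxq : x ≤ rat n := by
        rw [hn]
        have := min_le_right δ (y - x)
        linarith
      have hfq : f y - ε ≤ f (rat n) := by
        have hqd : dist (rat n : ℝ) y < δ := by
          rw [Real.dist_eq, hn, abs_lt]
          have := min_le_left δ (y - x)
          constructor <;> linarith
        have := hfc hqd
        rw [Real.dist_eq, abs_lt] at this
        linarith [this.1]
      have happ : f (rat n) ≤ apx f (n + 1) x := by
        simp only [apx]
        rw [if_pos hxq]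
        exact le_max_right _ _
      calc f y ≤ apx f (n+1) x + ε := by linarith
      _ ≤ (⨆ n, apx f n x) + ε := by
          have := le_ciSup hb (n+1)
          linarith
  rwa [he] at h




lemma apx_integrable (f : ℝ →ᵇ ℝ) (n : ℕ) (μ : Measure ℝ) [IsProbabilityMeasure μ] :
    Integrable (apx f n) μ :=
  (integrable_const ‖f‖).mono' (apx_measurable f n).aestronglyMeasurable
    (Filter.Eventually.of_forall fun x => by rw [Real.norm_eq_abs]; exact abs_apx_le f n x)

lemma integral_apx_le (f : ℝ →ᵇ ℝ) (A : Set (ProbabilityMeasure ℝ))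
    (hup : ∀ Q ∈ A, ∀ Q' : ProbabilityMeasure ℝ,
      (∀ x : ℝ, (Q' : Measure ℝ) (Set.Iic x) ≤ (Q : Measure ℝ) (Set.Iic x)) → Q' ∈ A)
    (u : ℝ) (hu : ∀ Q ∈ A, ∫ x, f x ∂(Q : Measure ℝ) ≤ u) :
    ∀ n, ∀ Q ∈ A, ∫ x, apx f n x ∂(Q : Measure ℝ) ≤ u := by
  intro n
  induction n with
  | zero => exact hu
  | succ n ih =>
    intro Q hQ
    set q := rat n with hq
    set S : Set ℝ := {x | x ≤ q ∧ apx f n x < f q} with hS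
    have hSm : MeasurableSet S := by
      rw [hS, Set.setOf_and]
      exact measurableSet_Iic.inter (measurableSet_lt (apx_measurable f n) measurable_const)
    set T : ℝ → ℝ := S.piecewise (fun _ => q) id with hTdef
    have hT : Measurable T := Measurable.piecewise hSm measurable_const measurable_id
    have hTx : ∀ x, x ≤ T x := by
      intro x
      by_cases hx : x ∈ S
      · rw [hTdef, Set.piecewise_eq_of_mem _ _ _ hx]; exact hx.1
      · rw [hTdef, Set.piecewise_eq_of_notMem _ _ _ hx]; exact le_rfl
    have hcomp : ∀ x, apx f (n + 1) x ≤ apx f n (T x) := by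
      intro x
      by_cases hx : x ∈ S
      · rw [hTdef, Set.piecewise_eq_of_mem _ _ _ hx]
        simp only [apx]
        rw [if_pos hx.1]
        exact max_le (hx.2.le.trans (coe_le_apx f n q)) (coe_le_apx f n q)
      · rw [hTdef, Set.piecewise_eq_of_notMem _ _ _ hx]
        simp only [apx, id]
        split
        · next h =>
          have hnlt : ¬ apx f n x < f q := fun hlt => hx ⟨h, hlt⟩
          exact max_le le_rfl (not_lt.mp hnlt)
        · exact le_rfl
    set Q' : ProbabilityMeasure ℝ :=
      ⟨(Q : Measure ℝ).map T, Measure.isProbabilityMeasure_map hT.aemeasurable⟩ with hQ'def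
    have hQ'A : Q' ∈ A := by
      refine hup Q hQ Q' fun x => ?_
      show ((Q : Measure ℝ).map T) (Set.Iic x) ≤ (Q : Measure ℝ) (Set.Iic x)
      rw [Measure.map_apply hT measurableSet_Iic]
      exact measure_mono fun z hz => le_trans (hTx z) hz
    have hint2 : Integrable (fun x => apx f n (T x)) (Q : Measure ℝ) :=
      (integrable_const ‖f‖).mono' ((apx_measurable f n).comp hT).aestronglyMeasurable
        (Filter.Eventually.of_forall fun x => by
          rw [Real.norm_eq_abs]; exact abs_apx_le f n (T x))
    calc ∫ x, apx f (n + 1) x ∂(Q : Measure ℝ)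
        ≤ ∫ x, apx f n (T x) ∂(Q : Measure ℝ) :=
          integral_mono (apx_integrable f (n + 1) _) hint2 hcomp
      _ = ∫ x, apx f n x ∂(Q' : Measure ℝ) :=
          (integral_map hT.aemeasurable (apx_measurable f n).aestronglyMeasurable).symm
      _ ≤ u := ih Q' hQ'A

lemma integral_env_le (f : ℝ →ᵇ ℝ) (A : Set (ProbabilityMeasure ℝ))
    (hup : ∀ Q ∈ A, ∀ Q' : ProbabilityMeasure ℝ,
      (∀ x : ℝ, (Q' : Measure ℝ) (Set.Iic x) ≤ (Q : Measure ℝ) (Set.Iic x)) → Q' ∈ A)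
    (u : ℝ) (hu : ∀ Q ∈ A, ∫ x, f x ∂(Q : Measure ℝ) ≤ u) :
    ∀ Q ∈ A, ∫ x, env f x ∂(Q : Measure ℝ) ≤ u := by
  intro Q hQ
  have htend : Tendsto (fun n => ∫ x, apx f n x ∂(Q : Measure ℝ)) atTop
      (𝓝 (∫ x, env f x ∂(Q : Measure ℝ))) :=
    tendsto_integral_of_dominated_convergence (fun _ => ‖f‖)
      (fun n => (apx_measurable f n).aestronglyMeasurable) (integrable_const _)
      (fun n => Filter.Eventually.of_forall fun x => by
        rw [Real.norm_eq_abs]; exact abs_apx_le f n x)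
      (Filter.Eventually.of_forall fun x => tendsto_apx f x)
  exact le_of_tendsto htend
    (Filter.Eventually.of_forall fun n => integral_apx_le f A hup u hu n Q hQ)



noncomputable def pairP (P : ProbabilityMeasure ℝ) : BoundedContinuousFunction ℝ ℝ → ℝ :=
  fun f => ∫ x, f x ∂(P : Measure ℝ)

lemma continuous_pairP : Continuous pairP := by
  apply continuous_pi
  intro f
  rw [continuous_iff_continuousAt]
  intro P
  exact ProbabilityMeasure.tendsto_iff_forall_integral_tendsto.mp tendsto_id f

lemma pairP_injective : Function.Injective pairP := by
  intro P Q h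
  have lip : LipschitzWith 1 NNReal.toReal := by
    refine LipschitzWith.mk_one fun a b => ?_
    rw [NNReal.dist_eq]
    exact le_rfl
  have hPQ : P.toFiniteMeasure = Q.toFiniteMeasure := by
    apply FiniteMeasure.ext_of_forall_lintegral_eq
    intro f
    set fr : ℝ →ᵇ ℝ := BoundedContinuousFunction.comp NNReal.toReal lip f with hfr
    have h1 : ∀ R : ProbabilityMeasure ℝ,
        ∫⁻ x, (f x : ℝ≥0∞) ∂(R : Measure ℝ) = ENNReal.ofReal (∫ x, fr x ∂(R : Measure ℝ)) := by
      intro R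
      rw [ofReal_integral_eq_lintegral_ofReal (fr.integrable _)
        (Filter.Eventually.of_forall fun x => (f x).coe_nonneg)]
      exact lintegral_congr fun x => (ENNReal.ofReal_coe_nnreal (p := f x)).symm
    have h2 := congrFun h fr
    simp only [pairP] at h2
    show ∫⁻ x, (f x : ℝ≥0∞) ∂(P : Measure ℝ) = ∫⁻ x, (f x : ℝ≥0∞) ∂(Q : Measure ℝ)
    rw [h1 P, h1 Q, h2]
  exact ProbabilityMeasure.toMeasure_injective (congrArg FiniteMeasure.toMeasure hPQ)

lemma pi_dual {I : Type*} (φ : (I → ℝ) →L[ℝ] ℝ) :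
    ∃ (F : Finset I) (c : I → ℝ), ∀ x, φ x = ∑ i ∈ F, c i * x i := by
  classical
  have h0 : φ ⁻¹' Metric.ball (0 : ℝ) 1 ∈ 𝓝 (0 : I → ℝ) := by
    have := φ.continuous.continuousAt (x := 0)
    rw [ContinuousAt, map_zero] at this
    exact this (Metric.ball_mem_nhds _ one_pos)
  rw [nhds_pi, Filter.mem_pi'] at h0
  obtain ⟨F, t, ht, hsub⟩ := h0
  have key : ∀ x : I → ℝ, (∀ i ∈ F, x i = 0) → φ x = 0 := by
    intro x hx
    by_contra hne
    have hr : 0 < |φ x| := abs_pos.mpr hne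
    obtain ⟨n, hn⟩ := exists_nat_gt (1 / |φ x|)
    have hn0 : (0:ℝ) < n := lt_trans (by positivity) hn
    have hmem : (n : ℝ) • x ∈ (↑F : Set I).pi t := by
      intro i hi
      have : ((n : ℝ) • x) i = 0 := by simp [hx i hi]
      rw [this]
      exact mem_of_mem_nhds (ht i)
    have hball := hsub hmem
    simp only [Set.mem_preimage, Metric.mem_ball, dist_zero_right, Real.norm_eq_abs] at hball
    have hsm : φ ((n : ℝ) • x) = (n : ℝ) * φ x := by
      rw [ContinuousLinearMap.map_smul, smul_eq_mul]
    rw [hsm, abs_mul, abs_of_pos hn0] at hball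
    have h2 : (1:ℝ) < n * |φ x| := by
      rw [div_lt_iff₀ hr] at hn
      linarith
    linarith
  refine ⟨F, fun i => φ (Pi.single i 1), fun x => ?_⟩
  set y : I → ℝ := ∑ i ∈ F, x i • (Pi.single (M := fun _ => ℝ) i (1:ℝ)) with hy
  have hyi : ∀ i ∈ F, y i = x i := by
    intro i hi
    rw [hy, Finset.sum_apply]
    have : ∀ j ∈ F, (x j • (Pi.single (M := fun _ => ℝ) j (1:ℝ))) i = if j = i then x j else 0 := by
      intro j _
      by_cases hji : j = i
      · subst hji; simp
      · simp [Pi.single_eq_of_ne (Ne.symm hji), hji]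
    rw [Finset.sum_congr rfl this, Finset.sum_ite_eq' F i (fun j => x j)]
    simp [hi]
  have hxy : φ (x - y) = 0 := key _ (fun i hi => by simp [hyi i hi])
  have : φ x = φ y := by
    have := map_sub φ x y
    rw [hxy] at this
    linarith [this]
  rw [this, hy, map_sum]
  refine Finset.sum_congr rfl fun i _ => ?_
  rw [ContinuousLinearMap.map_smul, smul_eq_mul, mul_comm]


end Stmt19Aux

open Stmt19Aux BoundedContinuousFunction Filter Topology Set
open scoped ENNReal NNReal

/-- `V(a,f) = sup {∫ f dQ | Q ∈ P(ℝ), Φ(Q) ≤ a}`. -/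
noncomputable def Vfun (Φ : ProbabilityMeasure ℝ → EReal) (a : ℝ)
    (f : BoundedContinuousFunction ℝ ℝ) : EReal :=
  sSup {x : EReal | ∃ Q : ProbabilityMeasure ℝ,
    Φ Q ≤ (a : EReal) ∧ x = ((∫ y, f y ∂(Q : Measure ℝ) : ℝ) : EReal)}

/-- `V⁻¹(v,f) = inf {a ∈ ℝ | V(a,f) ≥ v}`. -/
noncomputable def Vinv (Φ : ProbabilityMeasure ℝ → EReal) (v : ℝ)
    (f : BoundedContinuousFunction ℝ ℝ) : EReal :=
  sInf {y : EReal | ∃ a : ℝ, y = (a : EReal) ∧ (v : EReal) ≤ Vfun Φ a f}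

theorem stmt19 (Φ : ProbabilityMeasure ℝ → EReal)
    -- `Φ` takes values in `ℝ ∪ {+∞}`
    (hbot : ∀ P : ProbabilityMeasure ℝ, Φ P ≠ ⊥)
    -- `Φ` is monotone decreasing w.r.t. first-order stochastic dominance:
    -- `P ≼₁ Q` implies `Φ(P) ≥ Φ(Q)`
    (hmono : ∀ P Q : ProbabilityMeasure ℝ,
      (∀ x : ℝ, (Q : Measure ℝ) (Set.Iic x) ≤ (P : Measure ℝ) (Set.Iic x)) → Φ Q ≤ Φ P)
    -- `Φ` is quasiconvex
    (hqc : ∀ P Q R : ProbabilityMeasure ℝ, ∀ t : ℝ, 0 ≤ t → t ≤ 1 →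
      (R : Measure ℝ) = ENNReal.ofReal t • (P : Measure ℝ) +
        ENNReal.ofReal (1 - t) • (Q : Measure ℝ) →
      Φ R ≤ max (Φ P) (Φ Q))
    -- `Φ` is lower semicontinuous w.r.t. the weak topology `σ(P(ℝ), C_b(ℝ))`
    (hlsc : LowerSemicontinuous Φ) :
    ∀ P : ProbabilityMeasure ℝ,
      Φ P = sSup {y : EReal | ∃ f : BoundedContinuousFunction ℝ ℝ,
        Antitone f ∧ y = Vinv Φ (∫ x, f x ∂(P : Measure ℝ)) f} := by
  intro P
  set S : Set EReal := {y : EReal | ∃ f : BoundedContinuousFunction ℝ ℝ,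
    Antitone f ∧ y = Vinv Φ (∫ x, f x ∂(P : Measure ℝ)) f} with hSdef
  have partA : sSup S ≤ Φ P := by
    refine sSup_le ?_
    rintro y ⟨f, hf, rfl⟩
    by_cases hT : Φ P = ⊤
    · rw [hT]; exact le_top
    · have hr : ((Φ P).toReal : EReal) = Φ P := EReal.coe_toReal hT (hbot P)
      rw [← hr]
      refine sInf_le ⟨(Φ P).toReal, rfl, ?_⟩
      exact le_sSup ⟨P, le_of_eq hr.symm, rfl⟩
  have key : ∀ c : ℝ, (c : EReal) < Φ P → (c : EReal) ≤ sSup S := by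
    intro c hc
    set A : Set (ProbabilityMeasure ℝ) := {Q | Φ Q ≤ (c : EReal)} with hA
    by_cases hAne : A.Nonempty
    · -- A nonempty: separation
      have hAclosed : IsClosed A := hlsc.isClosed_preimage (c : EReal)
      have hPA : P ∉ A := fun h => absurd hc (not_lt.mpr h)
      -- convexity of the image
      have hconv : Convex ℝ (pairP '' A) := by
        rintro x ⟨Q1, hQ1, rfl⟩ y ⟨Q2, hQ2, rfl⟩ s t hs ht hst
        have hs1 : s ≤ 1 := by linarith
        have ht' : t = 1 - s := by linarith
        set μ : Measure ℝ := ENNReal.ofReal s • (Q1 : Measure ℝ) +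
          ENNReal.ofReal (1 - s) • (Q2 : Measure ℝ) with hμ
        have hprob : IsProbabilityMeasure μ := by
          constructor
          rw [hμ]
          simp only [Measure.coe_add, Pi.add_apply, Measure.coe_smul, Pi.smul_apply,
            measure_univ, smul_eq_mul, mul_one]
          rw [← ENNReal.ofReal_add hs (by linarith : (0:ℝ) ≤ 1 - s)]
          rw [show s + (1 - s) = 1 by ring, ENNReal.ofReal_one]
        set R : ProbabilityMeasure ℝ := ⟨μ, hprob⟩ with hR
        have hRA : R ∈ A := le_trans (hqc Q1 Q2 R s hs hs1 hμ) (max_le hQ1 hQ2)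
        refine ⟨R, hRA, ?_⟩
        funext f
        have hint1 : Integrable ⇑f (ENNReal.ofReal s • (Q1 : Measure ℝ)) :=
          (f.integrable _).smul_measure ENNReal.ofReal_ne_top
        have hint2 : Integrable ⇑f (ENNReal.ofReal (1 - s) • (Q2 : Measure ℝ)) :=
          (f.integrable _).smul_measure ENNReal.ofReal_ne_top
        have hcalc : pairP R f = s * ∫ x, f x ∂(Q1 : Measure ℝ) +
            (1 - s) * ∫ x, f x ∂(Q2 : Measure ℝ) := by
          show ∫ x, f x ∂(R : Measure ℝ) = _
          rw [show (R : Measure ℝ) = μ from rfl, hμ, integral_add_measure hint1 hint2,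
            integral_smul_measure, integral_smul_measure, ENNReal.toReal_ofReal hs,
            ENNReal.toReal_ofReal (by linarith : (0:ℝ) ≤ 1 - s), smul_eq_mul, smul_eq_mul]
        rw [hcalc]
        simp only [Pi.add_apply, Pi.smul_apply, smul_eq_mul, pairP, ht']
      -- the point is not in the closure of the image
      have hPK : pairP P ∉ closure (pairP '' A) := by
        intro hmem
        have h1 : (𝓝 (pairP P) ⊓ 𝓟 (pairP '' A)).NeBot := mem_closure_iff_clusterPt.mp hmem
        set G := Filter.comap pairP (𝓝 (pairP P) ⊓ 𝓟 (pairP '' A)) with hG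
        have hGne : G.NeBot := by
          rw [hG, Filter.comap_neBot_iff]
          intro t ht
          rw [Filter.mem_inf_iff] at ht
          obtain ⟨U, hU, V, hV, rfl⟩ := ht
          obtain ⟨z, hzU, hzS⟩ := Filter.inf_principal_neBot_iff.mp h1 U hU
          obtain ⟨Q, hQA, rfl⟩ := hzS
          exact ⟨Q, hzU, Filter.mem_principal.mp hV ⟨Q, hQA, rfl⟩⟩
        have htend : Tendsto pairP G (𝓝 (pairP P)) := tendsto_comap.mono_right inf_le_left
        have h3 : Tendsto (id : ProbabilityMeasure ℝ → ProbabilityMeasure ℝ) G (𝓝 P) := by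
          rw [ProbabilityMeasure.tendsto_iff_forall_integral_tendsto]
          intro f
          exact tendsto_pi_nhds.mp htend f
        have hev : ∀ᶠ Q in G, Q ∈ A := by
          have hmemG : A ∈ G := by
            rw [hG]
            have h4 : pairP '' A ∈ 𝓝 (pairP P) ⊓ 𝓟 (pairP '' A) :=
              Filter.mem_inf_of_right (Filter.mem_principal_self _)
            have h5 : pairP ⁻¹' (pairP '' A) ∈ Filter.comap pairP (𝓝 (pairP P) ⊓ 𝓟 (pairP '' A)) :=
              Filter.preimage_mem_comap h4
            rwa [Set.preimage_image_eq A pairP_injective] at h5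
          exact hmemG
        exact hPA (hAclosed.mem_of_tendsto h3 hev)
      -- separation
      obtain ⟨φ, u, hlt, hgt⟩ :=
        geometric_hahn_banach_closed_point (hconv.closure) isClosed_closure hPK
      obtain ⟨F, coef, hφ⟩ := pi_dual φ
      set f0 : ℝ →ᵇ ℝ := ∑ i ∈ F, coef i • i with hf0def
      have hf0 : ∀ Q : ProbabilityMeasure ℝ, ∫ x, f0 x ∂(Q : Measure ℝ) = φ (pairP Q) := by
        intro Q
        rw [hφ (pairP Q)]
        have hcoe : ⇑f0 = fun x => ∑ i ∈ F, coef i * i x := by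
          funext x
          rw [hf0def]
          simp [BoundedContinuousFunction.coe_sum, Finset.sum_apply]
        rw [hcoe, integral_finset_sum F (fun i _ => ((i.integrable _).const_mul (coef i)))]
        refine Finset.sum_congr rfl fun i _ => ?_
        rw [integral_const_mul]
        rfl
      have hsep1 : ∀ Q ∈ A, ∫ x, f0 x ∂(Q : Measure ℝ) ≤ u := by
        intro Q hQ
        rw [hf0 Q]
        exact le_of_lt (hlt _ (subset_closure ⟨Q, hQ, rfl⟩))
      have hsep2 : u < ∫ x, f0 x ∂(P : Measure ℝ) := by rw [hf0 P]; exact hgt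
      have hup : ∀ Q ∈ A, ∀ Q' : ProbabilityMeasure ℝ,
          (∀ x : ℝ, (Q' : Measure ℝ) (Set.Iic x) ≤ (Q : Measure ℝ) (Set.Iic x)) → Q' ∈ A :=
        fun Q hQ Q' hcdf => le_trans (hmono Q Q' hcdf) hQ
      have henv : ∀ Q ∈ A, ∫ x, env f0 x ∂(Q : Measure ℝ) ≤ u :=
        integral_env_le f0 A hup u hsep1
      set g : ℝ →ᵇ ℝ := envBCF f0 with hgdef
      have hganti : Antitone ⇑g := env_antitone f0
      have hv : u < ∫ x, g x ∂(P : Measure ℝ) := by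
        have hmono' : ∫ x, f0 x ∂(P : Measure ℝ) ≤ ∫ x, g x ∂(P : Measure ℝ) :=
          integral_mono (f0.integrable _) (g.integrable _)
            (fun x => le_env f0 (le_refl x))
        linarith
      refine le_trans ?_ (le_sSup (show Vinv Φ (∫ x, g x ∂(P : Measure ℝ)) g ∈ S
        from ⟨g, hganti, rfl⟩))
      refine le_sInf ?_
      rintro y ⟨a, rfl, ha⟩
      rw [EReal.coe_le_coe_iff]
      by_contra hac
      push_neg at hac
      have hVle : Vfun Φ a g ≤ (u : EReal) := by
        refine sSup_le ?_
        rintro x ⟨Q, hQa, rfl⟩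
        rw [EReal.coe_le_coe_iff]
        exact henv Q (le_trans hQa (EReal.coe_le_coe_iff.mpr hac.le))
      have hvu := le_trans ha hVle
      rw [EReal.coe_le_coe_iff] at hvu
      linarith
    · -- A empty: use f = 0
      refine le_trans ?_ (le_sSup (show (Vinv Φ (∫ x, (0 : ℝ →ᵇ ℝ) x ∂(P : Measure ℝ)) 0) ∈ S
        from ⟨0, fun a b _ => le_rfl, rfl⟩))
      refine le_sInf ?_
      rintro y ⟨a, rfl, ha⟩
      rw [EReal.coe_le_coe_iff]
      by_contra hac
      push_neg at hac
      have h0 : (∫ x, (0 : ℝ →ᵇ ℝ) x ∂(P : Measure ℝ)) = 0 := by simp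
      rw [h0] at ha
      have hempty : {x : EReal | ∃ Q : ProbabilityMeasure ℝ,
          Φ Q ≤ (a : EReal) ∧ x = ((∫ y, (0 : ℝ →ᵇ ℝ) y ∂(Q : Measure ℝ) : ℝ) : EReal)} = ∅ := by
        ext x
        simp only [Set.mem_setOf_eq, Set.mem_empty_iff_false, iff_false, not_exists]
        rintro Q ⟨hQ, -⟩
        exact hAne ⟨Q, le_trans hQ (EReal.coe_le_coe_iff.mpr hac.le)⟩
      rw [Vfun, hempty, sSup_empty] at ha
      exact absurd ha (by simp)
  have partB : Φ P ≤ sSup S := by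
    by_contra hcon
    push_neg at hcon
    obtain ⟨c, hc1, hc2⟩ := EReal.exists_between_coe_real hcon
    exact absurd (key c hc2) (not_le.mpr hc1)
  exact le_antisymm partB partA
end
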